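/- arXiv:1704.02859 — 10 statements merged into one kernel-verified Lean document; each statement's English description precedes it below -/
import Mathlib

section
/- For all nonzero reals a, b, c, x and every positive integer k, with [t] = t - 1/t and ⟨t⟩ = t + 1/t, one has [a b^{k²+2k} c^{k(k+1)} x^{(k+1)(2k+1)}] - ⟨x⟩·[a b^{k²} c^{k(k-1)} x^{k(2k-1)}] + [a b^{k²} c^{k(k-1)} x^{k(2k-1)+1}] = [(bc)^k x^{2k+1}]·⟨a b^{k(k+1)} c^{k²} x^{k(2k+1)}⟩. -/
/-!
With `u = a b^{k²} c^{k(k-1)} x^{k(2k-1)}` and `r = (bc)^k x^{2k}`, the four monomials of the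
identity are `u r² x`, `u x`, `r x` and `u r`. Since `⟨x⟩[u] = [ux] + [u/x]`, the left side
collapses to `[(ur)(rx)] - [(ur)/(rx)]`, and `[mq] - [m/q] = [q]⟨m⟩` for all `m, q`.
-/

section Field

variable {K : Type*} [Field K]

def bracket (t : K) : K := t - 1 / t

def angle (t : K) : K := t + 1 / t

theorem angle_mul_bracket (x u : K) :
    angle x * bracket u = bracket (u * x) + bracket (u / x) := by
  simp only [angle, bracket, div_eq_mul_inv, mul_inv, inv_inv]
  ring

theorem bracket_mul_sub_bracket_div (m q : K) :
    bracket (m * q) - bracket (m / q) = bracket q * angle m := by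
  simp only [angle, bracket, div_eq_mul_inv, mul_inv, inv_inv]
  ring

theorem bracket_mul_sq_sub_angle_mul_bracket_add_bracket (u r x : K) (hr : r ≠ 0) :
    bracket (u * r ^ 2 * x) - angle x * bracket u + bracket (u * x) =
      bracket (r * x) * angle (u * r) := by
  have hsq : u * r ^ 2 * x = u * r * (r * x) := by ring
  have hdiv : u / x = u * r / (r * x) := by rw [mul_comm u r, mul_div_mul_left _ _ hr]
  rw [angle_mul_bracket, hsq, hdiv, ← bracket_mul_sub_bracket_div]
  ring

end Field

theorem spiral_antidiagonal_identity_general (a b c x : ℝ) (hb : b ≠ 0)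
    (hc : c ≠ 0) (hx : x ≠ 0) (k : ℕ) (hk : 1 ≤ k) :
    (a * b^(k^2+2*k) * c^(k*(k+1)) * x^((k+1)*(2*k+1)) -
       1/(a * b^(k^2+2*k) * c^(k*(k+1)) * x^((k+1)*(2*k+1)))) -
    (x + 1/x) *
    (a * b^(k^2) * c^(k*(k-1)) * x^(k*(2*k-1)) -
       1/(a * b^(k^2) * c^(k*(k-1)) * x^(k*(2*k-1)))) +
    (a * b^(k^2) * c^(k*(k-1)) * x^(k*(2*k-1)+1) -
       1/(a * b^(k^2) * c^(k*(k-1)) * x^(k*(2*k-1)+1))) =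
    ((b*c)^k * x^(2*k+1) - 1/((b*c)^k * x^(2*k+1))) *
    (a * b^(k*(k+1)) * c^(k^2) * x^(k*(2*k+1)) +
       1/(a * b^(k*(k+1)) * c^(k^2) * x^(k*(2*k+1)))) := by
  obtain ⟨n, rfl⟩ := Nat.exists_eq_add_of_le' hk
  have hodd : 2 * (n + 1) - 1 = 2 * n + 1 := by omega
  rw [Nat.add_sub_cancel, hodd]
  have hr : (b * c) ^ (n + 1) * x ^ (2 * (n + 1)) ≠ 0 := by positivity
  have key := bracket_mul_sq_sub_angle_mul_bracket_add_bracket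
    (a * b ^ ((n + 1) ^ 2) * c ^ ((n + 1) * n) * x ^ ((n + 1) * (2 * n + 1))) _ x hr
  simp only [bracket, angle] at key
  convert key using 3 <;> ring

theorem spiral_antidiagonal_identity (a b c x : ℝ) (ha : a ≠ 0) (hb : b ≠ 0)
    (hc : c ≠ 0) (hx : x ≠ 0) (k : ℕ) (hk : 1 ≤ k) :
    (a * b^(k^2+2*k) * c^(k*(k+1)) * x^((k+1)*(2*k+1)) -
       1/(a * b^(k^2+2*k) * c^(k*(k+1)) * x^((k+1)*(2*k+1)))) -
    (x + 1/x) *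
    (a * b^(k^2) * c^(k*(k-1)) * x^(k*(2*k-1)) -
       1/(a * b^(k^2) * c^(k*(k-1)) * x^(k*(2*k-1)))) +
    (a * b^(k^2) * c^(k*(k-1)) * x^(k*(2*k-1)+1) -
       1/(a * b^(k^2) * c^(k*(k-1)) * x^(k*(2*k-1)+1))) =
    ((b*c)^k * x^(2*k+1) - 1/((b*c)^k * x^(2*k+1))) *
    (a * b^(k*(k+1)) * c^(k^2) * x^(k*(2*k+1)) +
       1/(a * b^(k*(k+1)) * c^(k^2) * x^(k*(2*k+1)))) :=
  spiral_antidiagonal_identity_general a b c x hb hc hx k hk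
end

section
/- Let f, g : ℝ_{>0} → ℝ be continuous with f not identically zero, satisfying f(a)g(x) = f(ax) + f(a/x) for all positive reals a, x. Then g(y²) = g(y)² - 2 for all y > 0. -/
/-! Multiplying the equation at `(a, y)` by `g y` and applying it again to both resulting terms
expresses `f a * g y ^ 2` through `f (a * y ^ 2) + f (a / y ^ 2) = f a * g (y ^ 2)`; it remains to
cancel `f a` at a point where `f` does not vanish. -/

lemma mul_apply_sq_eq_of_functional_eq {f g : ℝ → ℝ}
    (heq : ∀ a x : ℝ, 0 < a → 0 < x → f a * g x = f (a * x) + f (a / x))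
    {a y : ℝ} (ha : 0 < a) (hy : 0 < y) :
    f a * g y ^ 2 = f a * (g (y ^ 2) + 2) := by
  have hy0 : y ≠ 0 := hy.ne'
  calc f a * g y ^ 2 = f (a * y) * g y + f (a / y) * g y := by
        rw [sq, ← mul_assoc, heq a y ha hy]; ring
    _ = f (a * y * y) + f (a * y / y) + (f (a / y * y) + f (a / y / y)) := by
        rw [heq _ y (by positivity) hy, heq _ y (by positivity) hy]
    _ = f (a * y ^ 2) + f (a / y ^ 2) + 2 * f a := by
        rw [mul_div_cancel_right₀ a hy0, div_mul_cancel₀ a hy0, div_div, mul_assoc, ← sq]; ring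
    _ = f a * (g (y ^ 2) + 2) := by
        rw [mul_add, heq a _ ha (by positivity)]; ring

theorem g_square_relation_general (f g : ℝ → ℝ)
    (hne : ¬ (∀ x : ℝ, 0 < x → f x = 0))
    (heq : ∀ a x : ℝ, 0 < a → 0 < x → f a * g x = f (a*x) + f (a/x)) :
    ∀ y : ℝ, 0 < y → g (y^2) = (g y)^2 - 2 := by
  intro y hy
  obtain ⟨a, ha, hfa⟩ : ∃ a, 0 < a ∧ f a ≠ 0 := by simpa using hne
  have := mul_left_cancel₀ hfa (mul_apply_sq_eq_of_functional_eq heq ha hy)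
  linarith

theorem g_square_relation (f g : ℝ → ℝ)
    (hf : ContinuousOn f (Set.Ioi 0)) (hg : ContinuousOn g (Set.Ioi 0))
    (hne : ¬ (∀ x : ℝ, 0 < x → f x = 0))
    (heq : ∀ a x : ℝ, 0 < a → 0 < x → f a * g x = f (a*x) + f (a/x)) :
    ∀ y : ℝ, 0 < y → g (y^2) = (g y)^2 - 2 :=
  g_square_relation_general f g hne heq
end

section
/- Let f, g : ℝ_{>0} → ℝ be continuous with f not identically zero, satisfying f(a)g(x) = f(ax) + f(a/x) for all positive reals a, x. Then g(y³) = g(y)³ - 3g(y) for all y > 0. -/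
/-!
Expanding `f a * (g x * g y)` with the functional equation twice, once as `(f a * g x) * g y`
and once via `f a * g (x * y)` and `f a * g (x / y)`, and cancelling a nonzero value `f a` shows
that `g` satisfies the multiplicative d'Alembert equation `g x * g y = g (x * y) + g (x / y)` with
`g 1 = 2`. Taking `x = y` and then `x = y ^ 2` gives the Chebyshev relations
`g (y ^ 2) = g y ^ 2 - 2` and `g (y ^ 3) = g y ^ 3 - 3 * g y`.
-/

lemma map_one_eq_two_of_apply_ne_zero {f g : ℝ → ℝ} {a : ℝ} (ha : 0 < a) (hfa : f a ≠ 0)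
    (heq : ∀ a x : ℝ, 0 < a → 0 < x → f a * g x = f (a * x) + f (a / x)) :
    g 1 = 2 := by
  refine mul_left_cancel₀ hfa ?_
  rw [heq a 1 ha one_pos, mul_one, div_one]
  ring

lemma mul_eq_add_div_of_apply_ne_zero {f g : ℝ → ℝ} {a : ℝ} (ha : 0 < a) (hfa : f a ≠ 0)
    (heq : ∀ a x : ℝ, 0 < a → 0 < x → f a * g x = f (a * x) + f (a / x))
    {x y : ℝ} (hx : 0 < x) (hy : 0 < y) :
    g x * g y = g (x * y) + g (x / y) := by
  refine mul_left_cancel₀ hfa ?_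
  calc f a * (g x * g y)
      = f (a * x) * g y + f (a / x) * g y := by rw [← mul_assoc, heq a x ha hx, add_mul]
    _ = f (a * x * y) + f (a * x / y) + (f (a / x * y) + f (a / x / y)) := by
      rw [heq _ y (by positivity) hy, heq _ y (by positivity) hy]
    _ = f (a * (x * y)) + f (a / (x * y)) + (f (a * (x / y)) + f (a / (x / y))) := by
      rw [show a * x * y = a * (x * y) by ring, show a * x / y = a * (x / y) by ring,
        show a / x * y = a / (x / y) by rw [div_div_eq_mul_div, div_mul_eq_mul_div],
        show a / x / y = a / (x * y) by ring]
      ring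
    _ = f a * (g (x * y) + g (x / y)) := by
      rw [mul_add, heq a _ ha (by positivity), heq a _ ha (by positivity)]

lemma map_sq_of_dAlembert {g : ℝ → ℝ} (hg1 : g 1 = 2)
    (hd : ∀ x y : ℝ, 0 < x → 0 < y → g x * g y = g (x * y) + g (x / y))
    {y : ℝ} (hy : 0 < y) : g (y ^ 2) = g y ^ 2 - 2 := by
  have h := hd y y hy hy
  rw [div_self hy.ne', hg1, ← sq, ← sq] at h
  linarith

lemma map_cube_of_dAlembert {g : ℝ → ℝ} (hg1 : g 1 = 2)
    (hd : ∀ x y : ℝ, 0 < x → 0 < y → g x * g y = g (x * y) + g (x / y))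
    {y : ℝ} (hy : 0 < y) : g (y ^ 3) = g y ^ 3 - 3 * g y := by
  have h := hd (y ^ 2) y (by positivity) hy
  rw [← pow_succ, show y ^ 2 / y = y by field_simp, map_sq_of_dAlembert hg1 hd hy] at h
  linear_combination -h

theorem g_cube_relation_general (f g : ℝ → ℝ)
    (hne : ¬ (∀ x : ℝ, 0 < x → f x = 0))
    (heq : ∀ a x : ℝ, 0 < a → 0 < x → f a * g x = f (a*x) + f (a/x)) :
    ∀ y : ℝ, 0 < y → g (y^3) = (g y)^3 - 3 * g y := by
  intro y hy
  obtain ⟨a, ha, hfa⟩ : ∃ a, 0 < a ∧ f a ≠ 0 := by simpa using hne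
  exact map_cube_of_dAlembert (map_one_eq_two_of_apply_ne_zero ha hfa heq)
    (fun x y hx hy ↦ mul_eq_add_div_of_apply_ne_zero ha hfa heq hx hy) hy

theorem g_cube_relation (f g : ℝ → ℝ)
    (hf : ContinuousOn f (Set.Ioi 0)) (hg : ContinuousOn g (Set.Ioi 0))
    (hne : ¬ (∀ x : ℝ, 0 < x → f x = 0))
    (heq : ∀ a x : ℝ, 0 < a → 0 < x → f a * g x = f (a*x) + f (a/x)) :
    ∀ y : ℝ, 0 < y → g (y^3) = (g y)^3 - 3 * g y :=
  g_cube_relation_general f g hne heq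
end

section
/- Let g : ℝ_{>0} → ℝ be continuous and satisfy g(x) = g(1/x), g(x²) = g(x)² - 2, and g(x³) = g(x)³ - 3g(x) for all x > 0. Then there exists a complex number α that is real or purely imaginary such that g(x) = x^α + x^{-α} for all x > 0; equivalently, there exists a real number β such that either g(x) = x^β + x^{-β} for all x > 0, or g(x) = 2cos(β log x) for all x > 0. -/
/-!
Put `f t = g (exp t)`: an even continuous function on `ℝ` with `f (2t) = T₂ (f t)` and
`f (3t) = T₃ (f t)` for `T₂ y = y² - 2`, `T₃ y = y³ - 3y`, which satisfy
`T_n (2 cosh u) = 2 cosh (n u)` and `T_n (2 cos u) = 2 cos (n u)`.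
Either `f` exceeds `2` somewhere, say `f s = 2 cosh c` with `c > 0`, or `f = 2 cos θ` with
`θ = arccos (f / 2)`. In the first case the relations can be run backwards (halving and taking
thirds), because the competing preimages under `T₂` and `T₃` are excluded by `f ≥ -2`; this gives
`f (t s) = 2 cosh (t c)`. In the second case `θ (2w) = 2 θ w` and `θ (3w) = 3 θ w` for small `w`,
so `θ (t δ) = t θ δ`. Both identities propagate along `t ↦ t / 2, t / 3` and back inside `(0, 1]`,
hence hold on a dense subset, since `log 2 / log 3` is irrational, and then on `[0, 1]`.
Doubling extends the resulting formula from `[0, δ]` to all of `ℝ`.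
-/

open Real Set

theorem irrational_log_two_div_log_three : Irrational (log 2 / log 3) := by
  rintro ⟨q, hq⟩
  have hq_pos : (0 : ℝ) < q := hq ▸ div_pos (log_pos one_lt_two) (log_pos (by norm_num))
  obtain ⟨a, ha⟩ : ∃ a : ℕ, (a : ℤ) = q.num :=
    ⟨q.num.toNat, Int.toNat_of_nonneg (Rat.num_nonneg.2 (by exact_mod_cast hq_pos.le))⟩
  have hlog : (q.den : ℝ) * log 2 = a * log 3 := by
    have hq' : (q : ℝ) = q.num / q.den := Rat.cast_def q
    rw [hq, ← ha, Int.cast_natCast] at hq'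
    field_simp at hq'
    linarith
  have hpow : 2 ^ q.den = 3 ^ a := by
    have : (2 : ℝ) ^ q.den = 3 ^ a := by
      apply log_injOn_pos (by simp [pow_pos]) (by simp [pow_pos])
      rw [log_pow, log_pow, hlog]
    exact_mod_cast this
  have hodd : Odd (2 ^ q.den) := hpow ▸ Odd.pow (by decide)
  exact Nat.not_even_iff_odd.2 hodd ((Nat.even_pow' q.den_nz).2 even_two)

theorem dense_addSubgroupClosure_log_two_log_three :
    Dense (AddSubgroup.closure {log 2, log 3} : Set ℝ) :=
  dense_addSubgroupClosure_pair_iff.2 irrational_log_two_div_log_three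

theorem sub_nsmul_mem_iff {C : Set ℝ} {p : ℝ} (hp : 0 ≤ p) (hC : ∀ x ≤ 0, x ∈ C ↔ x - p ∈ C)
    {x : ℝ} (hx : x ≤ 0) (n : ℕ) : x - n * p ∈ C ↔ x ∈ C := by
  induction n with
  | zero => simp
  | succ n ih =>
    have hle : x - n * p ≤ 0 := by nlinarith [n.cast_nonneg (α := ℝ)]
    rw [← ih, hC _ hle]
    push_cast
    ring_nf

theorem Iic_zero_subset_of_sub_log_two_three {C : Set ℝ} (hC : IsClosed C) (h0 : 0 ∈ C)
    (h2 : ∀ x ≤ 0, x ∈ C ↔ x - log 2 ∈ C) (h3 : ∀ x ≤ 0, x ∈ C ↔ x - log 3 ∈ C) :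
    Iic 0 ⊆ C := by
  have hlog2 : 0 ≤ log 2 := log_nonneg one_le_two
  have hlog3 : 0 ≤ log 3 := log_nonneg (by norm_num)
  have hS : Iio 0 ∩ (AddSubgroup.closure {log 2, log 3} : Set ℝ) ⊆ C := by
    rintro z ⟨hz, hzS⟩
    obtain ⟨m, n, rfl⟩ := AddSubgroup.mem_closure_pair.1 hzS
    -- walk down from `0` by the negative parts of `m, n`, then up by their positive parts
    have hz' : m • log 2 + n • log 3 - n.toNat * log 3 ≤ 0 := by
      have : (0 : ℝ) ≤ n.toNat * log 3 := by positivity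
      linarith [mem_Iio.1 hz]
    have hdown : (0 : ℝ) - (-m).toNat * log 2 ≤ 0 := by
      have : (0 : ℝ) ≤ (-m).toNat * log 2 := by positivity
      linarith
    have hwalk : m • log 2 + n • log 3 - n.toNat * log 3 - m.toNat * log 2 =
        0 - (-m).toNat * log 2 - (-n).toNat * log 3 := by
      have hm : (m.toNat : ℝ) - (-m).toNat = m := by exact_mod_cast Int.toNat_sub_toNat_neg m
      have hn : (n.toNat : ℝ) - (-n).toNat = n := by exact_mod_cast Int.toNat_sub_toNat_neg n
      simp only [zsmul_eq_mul, ← hm, ← hn]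
      ring
    rw [← sub_nsmul_mem_iff hlog3 h3 (le_of_lt hz) n.toNat, ← sub_nsmul_mem_iff hlog2 h2 hz',
      hwalk, sub_nsmul_mem_iff hlog3 h3 hdown, sub_nsmul_mem_iff hlog2 h2 le_rfl]
    exact h0
  intro x hx
  rcases (mem_Iic.1 hx).lt_or_eq with hx | rfl
  · exact hC.closure_subset_iff.2 hS
      (dense_addSubgroupClosure_log_two_log_three.open_subset_closure_inter isOpen_Iio hx)
  · exact h0

theorem Icc_zero_one_subset_of_div_two_three {C : Set ℝ} (hC : IsClosed C) (h1 : 1 ∈ C)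
    (h2 : ∀ t ∈ Ioc 0 1, t ∈ C ↔ t / 2 ∈ C) (h3 : ∀ t ∈ Ioc 0 1, t ∈ C ↔ t / 3 ∈ C) :
    Icc 0 1 ⊆ C := by
  have hexp : ∀ x ≤ (0 : ℝ), exp x ∈ Ioc 0 1 := fun x hx => ⟨exp_pos x, exp_le_one_iff.2 hx⟩
  have hlog : Iic 0 ⊆ exp ⁻¹' C := by
    refine Iic_zero_subset_of_sub_log_two_three (hC.preimage continuous_exp) (by simpa using h1)
      (fun x hx => ?_) (fun x hx => ?_)
    · simpa [exp_sub, exp_log] using h2 _ (hexp x hx)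
    · simpa [exp_sub, exp_log] using h3 _ (hexp x hx)
  have hIoc : Ioc 0 1 ⊆ C := fun t ht => by
    simpa [exp_log ht.1] using hlog (mem_Iic.2 (log_nonpos ht.1.le ht.2))
  simpa [closure_Ioc zero_ne_one] using hC.closure_subset_iff.2 hIoc

theorem eq_of_eqOn_Icc_of_two_mul {f q φ : ℝ → ℝ} (hf : Function.Even f) (hq : Function.Even q)
    (hf2 : ∀ t, f (2 * t) = φ (f t)) (hq2 : ∀ t, q (2 * t) = φ (q t)) {δ : ℝ} (hδ : 0 < δ)
    (hbase : EqOn f q (Icc 0 δ)) : f = q := by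
  have hdouble : ∀ n : ℕ, EqOn f q (Icc 0 (2 ^ n * δ)) := by
    intro n
    induction n with
    | zero => simpa using hbase
    | succ n ih =>
      intro t ht
      have hle : t ≤ 2 * (2 ^ n * δ) := by rw [← mul_assoc, ← pow_succ']; exact ht.2
      have hhalf : t / 2 ∈ Icc 0 (2 ^ n * δ) := ⟨by linarith [ht.1], by linarith⟩
      rw [← mul_div_cancel₀ t two_ne_zero, hf2, hq2, ih hhalf]
  have hnonneg : ∀ t, 0 ≤ t → f t = q t := fun t ht => by
    obtain ⟨n, hn⟩ := pow_unbounded_of_one_lt (t / δ) one_lt_two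
    exact hdouble n ⟨ht, by rw [div_lt_iff₀ hδ] at hn; linarith⟩
  funext t
  rcases le_total 0 t with ht | ht
  · exact hnonneg t ht
  · rw [← hf t, ← hq t]
    exact hnonneg (-t) (neg_nonneg.2 ht)

theorem two_mul_cosh_two_mul (x : ℝ) : 2 * cosh (2 * x) = (2 * cosh x) ^ 2 - 2 := by
  rw [cosh_two_mul, sinh_sq]; ring

theorem two_mul_cosh_three_mul (x : ℝ) :
    2 * cosh (3 * x) = (2 * cosh x) ^ 3 - 3 * (2 * cosh x) := by
  rw [cosh_three_mul]; ring

theorem two_mul_cos_two_mul (x : ℝ) : 2 * cos (2 * x) = (2 * cos x) ^ 2 - 2 := by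
  rw [cos_two_mul]; ring

theorem two_mul_cos_three_mul (x : ℝ) : 2 * cos (3 * x) = (2 * cos x) ^ 3 - 3 * (2 * cos x) := by
  rw [cos_three_mul]; ring

theorem eq_of_sq_sub_two_eq {x y : ℝ} (hx : -2 ≤ x) (hy : 2 < y) (h : x ^ 2 - 2 = y ^ 2 - 2) :
    x = y := by
  nlinarith

theorem eq_of_cube_sub_three_mul_eq {x y : ℝ} (hy : 2 < y)
    (h : x ^ 3 - 3 * x = y ^ 3 - 3 * y) : x = y := by
  have : (x - y) * ((2 * x + y) ^ 2 + 3 * (y ^ 2 - 4)) = 0 := by linear_combination 4 * h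
  rcases mul_eq_zero.1 this with h | h
  · linarith
  · nlinarith [sq_nonneg (2 * x + y)]

section ChebyshevEquations

variable {f : ℝ → ℝ}

theorem eq_two_of_two_mul_of_three_mul (hf2 : ∀ t, f (2 * t) = f t ^ 2 - 2)
    (hf3 : ∀ t, f (3 * t) = f t ^ 3 - 3 * f t) : f 0 = 2 := by
  have h2 := hf2 0
  have h3 := hf3 0
  rw [mul_zero] at h2 h3
  have : (f 0 - 2) * (f 0 + 1) = 0 := by linear_combination -h2
  rcases mul_eq_zero.1 this with h | h
  · linarith
  · have : f 0 = -1 := by linarith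
    rw [this] at h3
    norm_num at h3

theorem neg_two_le_of_two_mul (hf2 : ∀ t, f (2 * t) = f t ^ 2 - 2) (t : ℝ) : -2 ≤ f t := by
  have h := hf2 (t / 2)
  rw [mul_div_cancel₀ t two_ne_zero] at h
  nlinarith [sq_nonneg (f (t / 2))]

theorem exists_eq_two_mul_cosh_of_two_lt (hfc : Continuous f) (hfe : Function.Even f)
    (hf2 : ∀ t, f (2 * t) = f t ^ 2 - 2) (hf3 : ∀ t, f (3 * t) = f t ^ 3 - 3 * f t) {s₀ : ℝ}
    (hs₀ : 2 < f s₀) : ∃ β, ∀ t, f t = 2 * cosh (β * t) := by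
  have hf0 := eq_two_of_two_mul_of_three_mul hf2 hf3
  set s := |s₀|
  have hs : 0 < s := abs_pos.2 fun h => by rw [h, hf0] at hs₀; exact lt_irrefl _ hs₀
  have hfs : f s = f s₀ := by rcases abs_choice s₀ with h | h <;> simp only [s, h, hfe s₀]
  set c := arcosh (f s / 2)
  have hc : 0 < c := arcosh_pos (by linarith)
  have hfc_eq : f s = 2 * cosh c := by rw [cosh_arcosh (by linarith)]; ring
  set C := {t | f (t * s) = 2 * cosh (t * c)}
  have hC : IsClosed C := isClosed_eq (by fun_prop) (by fun_prop)
  have hcosh : ∀ t ∈ Ioc (0 : ℝ) 1, ∀ k : ℝ, 0 < k → 2 < 2 * cosh (t / k * c) := fun t ht k hk => by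
    have : 1 < cosh (t / k * c) := one_lt_cosh.2 (by have := ht.1; positivity)
    linarith
  have hIcc : Icc 0 1 ⊆ C := by
    refine Icc_zero_one_subset_of_div_two_three hC (by simpa [C] using hfc_eq) ?_ ?_
    · intro t ht
      have hf := hf2 (t / 2 * s)
      have hcosh2 := two_mul_cosh_two_mul (t / 2 * c)
      rw [← mul_assoc, mul_div_cancel₀ t two_ne_zero] at hf hcosh2
      simp only [C, mem_ofPred_eq, hf, hcosh2]
      exact ⟨eq_of_sq_sub_two_eq (neg_two_le_of_two_mul hf2 _) (hcosh t ht 2 two_pos),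
        fun h => by rw [h]⟩
    · intro t ht
      have hf := hf3 (t / 3 * s)
      have hcosh3 := two_mul_cosh_three_mul (t / 3 * c)
      rw [← mul_assoc, mul_div_cancel₀ t three_ne_zero] at hf hcosh3
      simp only [C, mem_ofPred_eq, hf, hcosh3]
      exact ⟨eq_of_cube_sub_three_mul_eq (hcosh t ht 3 three_pos), fun h => by rw [h]⟩
  refine ⟨c / s, congrFun (eq_of_eqOn_Icc_of_two_mul (φ := fun y => y ^ 2 - 2) hfe (fun t => ?_) hf2
    (fun t => ?_) hs fun t ht => ?_)⟩
  · simp only [mul_neg, cosh_neg]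
  · rw [mul_left_comm, two_mul_cosh_two_mul]
  · have ht' : t / s ∈ Icc 0 1 := ⟨div_nonneg ht.1 hs.le, (div_le_one hs).2 ht.2⟩
    have := hIcc ht'
    simp only [C, mem_ofPred_eq, div_mul_cancel₀ t hs.ne'] at this
    rw [this, div_mul_eq_mul_div, div_mul_eq_mul_div, mul_comm t c]

theorem exists_eq_two_mul_cos_of_le_two (hfc : Continuous f) (hfe : Function.Even f)
    (hf2 : ∀ t, f (2 * t) = f t ^ 2 - 2) (hf3 : ∀ t, f (3 * t) = f t ^ 3 - 3 * f t)
    (hle : ∀ t, f t ≤ 2) : ∃ β, ∀ t, f t = 2 * cos (β * t) := by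
  set θ := fun t => arccos (f t / 2)
  have hθc : Continuous θ := continuous_arccos.comp (hfc.div_const 2)
  have hfθ : ∀ t, f t = 2 * cos (θ t) := fun t => by
    rw [cos_arccos (by linarith [neg_two_le_of_two_mul hf2 t]) (by linarith [hle t])]; ring
  have hθ0 : θ 0 = 0 := by simp [θ, eq_two_of_two_mul_of_three_mul hf2 hf3]
  have hθ_nonneg : ∀ t, 0 ≤ θ t := fun t => arccos_nonneg _
  have hθ2 : ∀ w, θ w ≤ π / 3 → θ (2 * w) = 2 * θ w := fun w hw => by
    change arccos (f (2 * w) / 2) = _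
    rw [hf2, hfθ w, ← two_mul_cos_two_mul, mul_div_cancel_left₀ _ two_ne_zero,
      arccos_cos (by linarith [hθ_nonneg w]) (by linarith [pi_pos])]
  have hθ3 : ∀ w, θ w ≤ π / 3 → θ (3 * w) = 3 * θ w := fun w hw => by
    change arccos (f (3 * w) / 2) = _
    rw [hf3, hfθ w, ← two_mul_cos_three_mul, mul_div_cancel_left₀ _ two_ne_zero,
      arccos_cos (by linarith [hθ_nonneg w]) (by linarith [pi_pos])]
  obtain ⟨δ, hδ, hθδ⟩ : ∃ δ > 0, ∀ w ∈ Icc 0 δ, θ w ≤ π / 3 := by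
    have : ∀ᶠ w in nhds 0, θ w < π / 3 :=
      hθc.continuousAt.eventually_lt continuousAt_const (by rw [hθ0]; positivity)
    obtain ⟨ε, hε, hball⟩ := Metric.eventually_nhds_iff.1 this
    refine ⟨ε / 2, by positivity, fun w hw => (hball ?_).le⟩
    rw [Real.dist_eq, sub_zero, abs_of_nonneg hw.1]
    linarith [hw.2]
  set C := {t | θ (t * δ) = t * θ δ}
  have hC : IsClosed C := isClosed_eq (by fun_prop) (by fun_prop)
  have hsmall : ∀ t ∈ Ioc (0 : ℝ) 1, ∀ k : ℝ, 1 ≤ k → θ (t / k * δ) ≤ π / 3 := fun t ht k hk => by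
    refine hθδ _ ⟨by have := ht.1; positivity, ?_⟩
    have : t / k ≤ 1 := (div_le_one (by linarith)).2 (by linarith [ht.2])
    nlinarith
  have hIcc : Icc 0 1 ⊆ C := by
    refine Icc_zero_one_subset_of_div_two_three hC (by simp [C]) (fun t ht => ?_) (fun t ht => ?_)
    · have h := hθ2 _ (hsmall t ht 2 one_le_two)
      rw [← mul_assoc, mul_div_cancel₀ t two_ne_zero] at h
      simp only [C, mem_ofPred_eq, h]
      constructor <;> intro <;> linarith
    · have h := hθ3 _ (hsmall t ht 3 (by norm_num))
      rw [← mul_assoc, mul_div_cancel₀ t three_ne_zero] at h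
      simp only [C, mem_ofPred_eq, h]
      constructor <;> intro <;> linarith
  refine ⟨θ δ / δ, congrFun (eq_of_eqOn_Icc_of_two_mul (φ := fun y => y ^ 2 - 2) hfe
    (fun t => ?_) hf2 (fun t => ?_) hδ fun t ht => ?_)⟩
  · simp only [mul_neg, cos_neg]
  · rw [mul_left_comm, two_mul_cos_two_mul]
  · have ht' : t / δ ∈ Icc 0 1 := ⟨div_nonneg ht.1 hδ.le, (div_le_one hδ).2 ht.2⟩
    have := hIcc ht'
    simp only [C, mem_ofPred_eq, div_mul_cancel₀ t hδ.ne'] at this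
    rw [hfθ, this, div_mul_eq_mul_div, div_mul_eq_mul_div, mul_comm t]

end ChebyshevEquations

theorem g_characterization (g : ℝ → ℝ) (hg : ContinuousOn g (Set.Ioi 0))
    (h1 : ∀ x : ℝ, 0 < x → g x = g (1/x))
    (h2 : ∀ x : ℝ, 0 < x → g (x^2) = (g x)^2 - 2)
    (h3 : ∀ x : ℝ, 0 < x → g (x^3) = (g x)^3 - 3 * g x) :
    ∃ β : ℝ, (∀ x : ℝ, 0 < x → g x = x ^ β + x ^ (-β)) ∨
      (∀ x : ℝ, 0 < x → g x = 2 * Real.cos (β * Real.log x)) := by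
  set f := fun t => g (exp t)
  have hfc : Continuous f := hg.comp_continuous continuous_exp exp_pos
  have hfe : Function.Even f := fun t => by
    simp only [f, exp_neg, ← one_div]
    exact (h1 _ (exp_pos t)).symm
  have hf2 : ∀ t, f (2 * t) = f t ^ 2 - 2 := fun t => by
    simp only [f]
    rw [← h2 _ (exp_pos t), ← exp_nat_mul]
    norm_num
  have hf3 : ∀ t, f (3 * t) = f t ^ 3 - 3 * f t := fun t => by
    simp only [f]
    rw [← h3 _ (exp_pos t), ← exp_nat_mul]
    norm_num
  have hgf : ∀ x, 0 < x → g x = f (log x) := fun x hx => by simp only [f, exp_log hx]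
  by_cases hbig : ∃ s, 2 < f s
  · obtain ⟨s, hs⟩ := hbig
    obtain ⟨β, hβ⟩ := exists_eq_two_mul_cosh_of_two_lt hfc hfe hf2 hf3 hs
    refine ⟨β, Or.inl fun x hx => ?_⟩
    rw [hgf x hx, hβ, cosh_eq, rpow_def_of_pos hx, rpow_def_of_pos hx]
    ring_nf
  · obtain ⟨β, hβ⟩ := exists_eq_two_mul_cos_of_le_two hfc hfe hf2 hf3
      fun t => not_lt.1 fun h => hbig ⟨t, h⟩
    exact ⟨β, Or.inr fun x hx => by rw [hgf x hx, hβ]⟩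
end

section
/- Let f : ℝ_{>0} → ℝ be continuous and satisfy 2f(a) = f(ax) + f(a/x) for all positive reals a, x. Then there exist real constants c₁, c₂ such that f(x) = c₁ + c₂ log x for all x > 0. -/
/-!
Substituting `a = exp u`, `x = exp v` turns the equation into Jensen's equation
`2 g(u) = g(u + v) + g(u - v)` for the continuous function `g = f ∘ exp` on `ℝ`. Comparing the
equation at `((x + y)/2, (x - y)/2)` and at `((x + y)/2, (x + y)/2)` shows that `g - g 0` is
additive, and a continuous additive function on `ℝ` is linear; hence `g` is affine and
`f = g ∘ log` is affine in `log`.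
-/

section JensenEquation

variable {E : Type*} [AddCommGroup E]

theorem add_map_add_map_zero_of_jensen {g : ℝ → E}
    (hg : ∀ u v : ℝ, 2 • g u = g (u + v) + g (u - v)) (x y : ℝ) :
    g (x + y) + g 0 = g x + g y := by
  have hxy := hg ((x + y) / 2) ((x - y) / 2)
  have hdiag := hg ((x + y) / 2) ((x + y) / 2)
  rw [add_halves, sub_self] at hdiag
  rw [show (x + y) / 2 + (x - y) / 2 = x by ring, show (x + y) / 2 - (x - y) / 2 = y by ring]
    at hxy
  rw [← hdiag, hxy]

variable [Module ℝ E] [TopologicalSpace E] [IsTopologicalAddGroup E] [ContinuousSMul ℝ E]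
  [T2Space E]

theorem eq_add_smul_of_continuous_of_jensen {g : ℝ → E} (hc : Continuous g)
    (hg : ∀ u v : ℝ, 2 • g u = g (u + v) + g (u - v)) (t : ℝ) :
    g t = g 0 + t • (g 1 - g 0) := by
  let h : ℝ →+ E := AddMonoidHom.mk' (fun t => g t - g 0) fun x y => by
    have := add_map_add_map_zero_of_jensen hg x y
    rw [← sub_eq_zero] at this ⊢
    rw [← this]
    abel
  have hlin := map_real_smul h (hc.sub continuous_const) t 1
  simp only [smul_eq_mul, mul_one, h, AddMonoidHom.mk'_apply] at hlin
  rw [← hlin, add_sub_cancel]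

end JensenEquation

theorem jensen_multiplicative (f : ℝ → ℝ) (hf : ContinuousOn f (Set.Ioi 0))
    (heq : ∀ a x : ℝ, 0 < a → 0 < x → 2 * f a = f (a*x) + f (a/x)) :
    ∃ c₁ c₂ : ℝ, ∀ x : ℝ, 0 < x → f x = c₁ + c₂ * Real.log x := by
  set g : ℝ → ℝ := f ∘ Real.exp
  have hgc : Continuous g := hf.comp_continuous Real.continuous_exp Real.exp_pos
  have hg : ∀ u v : ℝ, 2 • g u = g (u + v) + g (u - v) := fun u v => by
    simpa [g, Real.exp_add, Real.exp_sub] using heq _ _ (Real.exp_pos u) (Real.exp_pos v)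
  refine ⟨g 0, g 1 - g 0, fun x hx => ?_⟩
  rw [mul_comm, ← smul_eq_mul, ← eq_add_smul_of_continuous_of_jensen hgc hg]
  simp [g, Real.exp_log hx]
end

section
/- Let α ≠ 0 be a real number and let f : ℝ_{>0} → ℝ be continuous and satisfy (x^α + x^{-α}) f(a) = f(ax) + f(a/x) for all positive reals a, x. Then there exist real constants c₁, c₂ such that f(x) = c₁ x^α + c₂ x^{-α} for all x > 0. -/
/-!
Subtracting the solution `c₁ x^α + c₂ x^(-α)` that agrees with `f` at `1` and `2` leaves a
continuous solution `h` with `h 1 = h 2 = 0`. For such `h` the equation gives `h x⁻¹ = -h x`,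
`2 h (a x) = φ x * h a + φ a * h x` and `h (x * x) = φ x * h x`, where `φ x = x^α + x^(-α) > 0`.
Hence the zeros of `t ↦ h (exp t)` form an additive subgroup of `ℝ` that contains `log 2` and is
closed under halving, so it is dense; being closed by continuity, it is all of `ℝ`.
-/

open Real Set

theorem AddSubgroup.dense_of_half_mem {K : Type*} [Field K] [LinearOrder K]
    [IsStrictOrderedRing K] [Archimedean K] [TopologicalSpace K] [OrderTopology K]
    {S : AddSubgroup K} (hS : S ≠ ⊥) (half_mem : ∀ t ∈ S, t / 2 ∈ S) : Dense (S : Set K) :=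
  S.dense_of_no_min hS fun ⟨a, ⟨haS, ha⟩, hmin⟩ =>
    (half_lt_self ha).not_ge (hmin ⟨half_mem a haS, half_pos ha⟩)

def SolvesPowerEq (α : ℝ) (f : ℝ → ℝ) : Prop :=
  ∀ a x : ℝ, 0 < a → 0 < x → (x ^ α + x ^ (-α)) * f a = f (a * x) + f (a / x)

theorem solvesPowerEq_rpow (α : ℝ) : SolvesPowerEq α (· ^ α) := by
  intro a x ha hx
  have : x ^ α ≠ 0 := (rpow_pos_of_pos hx α).ne'
  beta_reduce
  rw [mul_rpow ha.le hx.le, div_rpow ha.le hx.le, rpow_neg hx.le]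
  field_simp

namespace SolvesPowerEq

variable {α : ℝ} {f g : ℝ → ℝ}

theorem of_neg (hf : SolvesPowerEq (-α) f) : SolvesPowerEq α f := by
  intro a x ha hx
  have := hf a x ha hx
  rwa [neg_neg, add_comm] at this

theorem add (hf : SolvesPowerEq α f) (hg : SolvesPowerEq α g) : SolvesPowerEq α (f + g) := by
  intro a x ha hx
  simp only [Pi.add_apply]
  rw [mul_add, hf a x ha hx, hg a x ha hx]
  ring

theorem sub (hf : SolvesPowerEq α f) (hg : SolvesPowerEq α g) : SolvesPowerEq α (f - g) := by
  intro a x ha hx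
  simp only [Pi.sub_apply]
  rw [mul_sub, hf a x ha hx, hg a x ha hx]
  ring

theorem const_mul (hf : SolvesPowerEq α f) (c : ℝ) : SolvesPowerEq α (fun x ↦ c * f x) := by
  intro a x ha hx
  rw [mul_left_comm, hf a x ha hx]
  ring

theorem apply_inv (hf : SolvesPowerEq α f) (h1 : f 1 = 0) {x : ℝ} (hx : 0 < x) :
    f x⁻¹ = -f x := by
  have := hf 1 x one_pos hx
  rw [h1, mul_zero, one_mul, one_div] at this
  linarith

theorem two_mul_apply_mul (hf : SolvesPowerEq α f) (h1 : f 1 = 0) {a x : ℝ} (ha : 0 < a)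
    (hx : 0 < x) :
    2 * f (a * x) = (x ^ α + x ^ (-α)) * f a + (a ^ α + a ^ (-α)) * f x := by
  have hax := hf a x ha hx
  have hxa := hf x a hx ha
  rw [mul_comm x a, ← inv_div, hf.apply_inv h1 (div_pos ha hx)] at hxa
  linarith

theorem apply_mul_self (hf : SolvesPowerEq α f) (h1 : f 1 = 0) {x : ℝ} (hx : 0 < x) :
    f (x * x) = (x ^ α + x ^ (-α)) * f x := by
  have := hf x x hx hx
  rw [div_self hx.ne', h1] at this
  linarith

def logZeros (hf : SolvesPowerEq α f) (h1 : f 1 = 0) : AddSubgroup ℝ where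
  carrier := {t | f (exp t) = 0}
  zero_mem' := by simpa using h1
  add_mem' := by
    intro s t (hs : f (exp s) = 0) (ht : f (exp t) = 0)
    have := hf.two_mul_apply_mul h1 (exp_pos s) (exp_pos t)
    rw [hs, ht, mul_zero, mul_zero, ← exp_add] at this
    show f (exp (s + t)) = 0
    linarith
  neg_mem' := by
    intro t (ht : f (exp t) = 0)
    show f (exp (-t)) = 0
    rw [exp_neg, hf.apply_inv h1 (exp_pos t), ht, neg_zero]

theorem half_mem_logZeros (hf : SolvesPowerEq α f) (h1 : f 1 = 0) {t : ℝ}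
    (ht : t ∈ hf.logZeros h1) : t / 2 ∈ hf.logZeros h1 := by
  have hsq := hf.apply_mul_self h1 (exp_pos (t / 2))
  rw [← exp_add, add_halves] at hsq
  have hpos : 0 < exp (t / 2) ^ α + exp (t / 2) ^ (-α) := by positivity
  exact (mul_eq_zero.1 (hsq.symm.trans ht)).resolve_left hpos.ne'

theorem eqOn_zero (hf : SolvesPowerEq α f) (h1 : f 1 = 0) (hc : ContinuousOn f (Ioi 0))
    {b : ℝ} (hb0 : 0 < b) (hb1 : b ≠ 1) (hb : f b = 0) : EqOn f 0 (Ioi 0) := by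
  have hlogb : log b ∈ hf.logZeros h1 := show f (exp (log b)) = 0 by rwa [exp_log hb0]
  have hbot : hf.logZeros h1 ≠ ⊥ := fun h ↦
    log_ne_zero_of_pos_of_ne_one hb0 hb1 ((AddSubgroup.mem_bot).1 (h ▸ hlogb))
  have hdense := AddSubgroup.dense_of_half_mem hbot fun _ ↦ hf.half_mem_logZeros h1
  have hclosed : IsClosed (hf.logZeros h1 : Set ℝ) :=
    isClosed_eq (hc.comp_continuous continuous_exp exp_pos) continuous_const
  intro x (hx : 0 < x)
  have : log x ∈ hf.logZeros h1 := hclosed.closure_subset (hdense (log x))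
  simpa [logZeros, exp_log hx] using this

end SolvesPowerEq

theorem exists_add_eq_and_rpow_add_eq {α b : ℝ} (hα : α ≠ 0) (hb0 : 0 < b) (hb1 : b ≠ 1)
    (u v : ℝ) : ∃ c₁ c₂ : ℝ, c₁ + c₂ = u ∧ c₁ * b ^ α + c₂ * b ^ (-α) = v := by
  have hne : b ^ (-α) - b ^ α ≠ 0 := by
    rw [sub_ne_zero, Ne, rpow_right_inj hb0 hb1, neg_eq_iff_eq_neg, eq_comm]
    exact fun h ↦ hα (by linarith)
  set c₂ := (v - u * b ^ α) / (b ^ (-α) - b ^ α)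
  refine ⟨u - c₂, c₂, by ring, ?_⟩
  have : c₂ * (b ^ (-α) - b ^ α) = v - u * b ^ α := div_mul_cancel₀ _ hne
  linear_combination this

theorem power_functional_equation (α : ℝ) (hα : α ≠ 0) (f : ℝ → ℝ)
    (hf : ContinuousOn f (Set.Ioi 0))
    (heq : ∀ a x : ℝ, 0 < a → 0 < x →
      (x ^ α + x ^ (-α)) * f a = f (a*x) + f (a/x)) :
    ∃ c₁ c₂ : ℝ, ∀ x : ℝ, 0 < x → f x = c₁ * x ^ α + c₂ * x ^ (-α) := by
  obtain ⟨c₁, c₂, h1, h2⟩ := exists_add_eq_and_rpow_add_eq hα two_pos (by norm_num) (f 1) (f 2)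
  set g : ℝ → ℝ := fun x ↦ c₁ * x ^ α + c₂ * x ^ (-α)
  have hg : SolvesPowerEq α g :=
    ((solvesPowerEq_rpow α).const_mul c₁).add ((solvesPowerEq_rpow (-α)).of_neg.const_mul c₂)
  have hgc : ContinuousOn g (Ioi 0) := fun x (hx : 0 < x) ↦ by
    fun_prop (disch := exact Or.inl hx.ne')
  have hfg := (SolvesPowerEq.sub heq hg).eqOn_zero (by simp [g, h1]) (hf.sub hgc) two_pos
    (by norm_num) (by simp [g, h2])
  exact ⟨c₁, c₂, fun x hx ↦ sub_eq_zero.1 (hfg hx)⟩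
end

section
/- The set of rational numbers of the form 2^n · 3^{-m}, where n and m range over the nonnegative integers, is dense in the positive real numbers. -/
/-!
Taking logarithms, it suffices that the numbers `n log 2 - m log 3` (`n m : ℕ`) are dense in `ℝ`.
Since `log 2 / log 3` is irrational (`2 ^ q = 3 ^ p` forces `p = q = 0`), the multiples of `log 2` are
dense on the compact circle `ℝ ⧸ (log 3)ℤ`, and there already the multiples `n • log 2` with
`n ≥ N` accumulate at every point. For `N` large, `n log 2` exceeds the target, so the multiple
of `log 3` that has to be subtracted is a positive one.
-/

open Filter Topology Set

theorem irrational_log_div_log_of_coprime {a b : ℕ} (ha : 1 < a) (hb : 1 < b) (hab : a.Coprime b) :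
    Irrational (Real.log a / Real.log b) := by
  rintro ⟨r, hr⟩
  have hla : 0 < Real.log a := Real.log_pos (by exact_mod_cast ha)
  have hlb : 0 < Real.log b := Real.log_pos (by exact_mod_cast hb)
  have hnum : 0 < r.num := Rat.num_pos.2 (by exact_mod_cast hr ▸ div_pos hla hlb)
  have hlog : Real.log (a ^ r.den : ℕ) = Real.log (b ^ r.num.toNat : ℕ) := by
    have hnum' : ((r.num.toNat : ℕ) : ℝ) = r.num := by exact_mod_cast Int.toNat_of_nonneg hnum.le
    rw [Rat.cast_def, div_eq_div_iff (by positivity) hlb.ne'] at hr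
    push_cast
    rw [Real.log_pow, Real.log_pow, hnum']
    linarith
  have hpow : a ^ r.den = b ^ r.num.toNat := by
    exact_mod_cast Real.log_injOn_pos (by simp; positivity) (by simp; positivity) hlog
  have hone := hab.pow r.den r.num.toNat
  rw [hpow, Nat.coprime_self] at hone
  exact (Nat.one_lt_pow (by omega) hb).ne' hone

theorem dense_setOf_natCast_mul_sub_natCast_mul {a b : ℝ} (ha : 0 < a) (hb : 0 < b)
    (hab : Irrational (a / b)) : Dense {x : ℝ | ∃ n m : ℕ, x = n * a - m * b} := by
  have : Fact (0 < b) := ⟨hb⟩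
  intro t
  rw [Metric.mem_closure_iff]
  intro ε hε
  have hcluster : MapClusterPt (t : AddCircle b) atTop (· • (a : AddCircle b) : ℕ → AddCircle b) :=
    ((mapClusterPt_atTop_nsmul_tfae _ _).out 3 0).1 (AddCircle.denseRange_zsmul_coe_iff.2 hab _)
  have hnhds : QuotientAddGroup.mk '' Metric.ball t ε ∈ 𝓝 (t : AddCircle b) :=
    QuotientAddGroup.isOpenMap_coe.image_mem_nhds (Metric.ball_mem_nhds t hε)
  obtain ⟨N, hN⟩ := exists_nat_gt ((t + ε) / a)
  obtain ⟨n, hNn, u, hu, hun⟩ := frequently_atTop.1 (hcluster.frequently hnhds) N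
  obtain ⟨k, hkb⟩ : ∃ k : ℤ, k • b = n * a - u := by
    rw [← AddSubgroup.mem_zmultiples_iff, ← QuotientAddGroup.eq_iff_sub_mem, ← nsmul_eq_mul,
      AddCircle.coe_nsmul, hun]
  rw [zsmul_eq_mul] at hkb
  have hk : 0 < k := by
    have hNa : t + ε < N * a := (div_lt_iff₀ ha).1 hN
    have hnN : (N : ℝ) * a ≤ n * a := by gcongr
    have hut : u < t + ε := by linarith [abs_lt.1 (Real.dist_eq u t ▸ Metric.mem_ball.1 hu)]
    exact_mod_cast (pos_iff_pos_of_mul_pos (a := (k : ℝ)) (by linarith)).2 hb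
  refine ⟨u, ⟨n, k.toNat, ?_⟩, by rwa [dist_comm]⟩
  rw [show ((k.toNat : ℕ) : ℝ) = k by exact_mod_cast Int.toNat_of_nonneg hk.le, hkb]
  ring

theorem Ioi_subset_closure_setOf_pow_div_pow {a b : ℕ} (ha : 1 < a) (hb : 1 < b)
    (hab : a.Coprime b) : Ioi 0 ⊆ closure {x : ℝ | ∃ n m : ℕ, x = (a : ℝ) ^ n / (b : ℝ) ^ m} := by
  intro y hy
  have hdense := dense_setOf_natCast_mul_sub_natCast_mul (Real.log_pos (by exact_mod_cast ha))
    (Real.log_pos (by exact_mod_cast hb)) (irrational_log_div_log_of_coprime ha hb hab)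
  rw [← Real.exp_log hy]
  refine map_mem_closure Real.continuous_exp (hdense _) ?_
  rintro _ ⟨n, m, rfl⟩
  refine ⟨n, m, ?_⟩
  rw [Real.exp_sub, Real.exp_nat_mul, Real.exp_nat_mul, Real.exp_log (by positivity),
    Real.exp_log (by positivity)]

theorem two_three_dense :
    ∀ y : ℝ, 0 < y →
      y ∈ closure {x : ℝ | ∃ n m : ℕ, x = 2^n / 3^m} := by
  intro y hy
  simpa using Ioi_subset_closure_setOf_pow_div_pow (a := 2) (b := 3) (by norm_num) (by norm_num)
    (by norm_num) hy
end

section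
/- The determinant of the 3×3 spiral matrix M₃(a,b,c,x,y) with rows (a+b+x+2y, a+b+x+y, a+b+x), (a+b+c+x+2y, a, a+x), (a+b+2c+x+2y, a+b+2c+2x+2y, a+b+2c+3x+2y) equals -(ax + bx + x² + ay + by + 2cy + 2y² + 3xy)·(b+c+2(x+y)), for all elements a, b, c, x, y of a commutative ring. -/
theorem spiral_det_three {R : Type*} [CommRing R] (a b c x y : R) :
    Matrix.det !![a+b+x+2*y, a+b+x+y, a+b+x;
                  a+b+c+x+2*y, a, a+x;
                  a+b+2*c+x+2*y, a+b+2*c+2*x+2*y, a+b+2*c+3*x+2*y] =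
    -((a*x + b*x + x^2 + a*y + b*y + 2*c*y + 2*y^2 + 3*x*y) *
      (b + c + 2*(x+y))) := by
  rw [Matrix.det_fin_three]
  simp only [Matrix.of_apply, Matrix.cons_val', Matrix.cons_val_zero, Matrix.cons_val_one,
    Matrix.cons_val_fin_one, Matrix.cons_val]
  ring
end

section
/- For any field element q ≠ 0, the determinant of the 3×3 matrix with rows (q^{a+b+x+2y}, q^{a+b+x+y}, q^{a+b+x}), (q^{a+b+c+x+2y}, q^{a}, q^{a+x}), (q^{a+b+2c+x+2y}, q^{a+b+2c+2x+2y}, q^{a+b+2c+3x+2y}) equals -q^{3a + 2(b+c+x+y)}·(1 - q^{x+y})·(1 - q^{b+c+2(x+y)}), for all natural number parameters a, b, c, x, y. -/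
theorem q_spiral_det_three_general {K : Type*} [Field K] (q : K)
    (a b c x y : ℕ) :
    Matrix.det !![q^(a+b+x+2*y), q^(a+b+x+y), q^(a+b+x);
                  q^(a+b+c+x+2*y), q^a, q^(a+x);
                  q^(a+b+2*c+x+2*y), q^(a+b+2*c+2*x+2*y), q^(a+b+2*c+3*x+2*y)] =
    -(q^(3*a + 2*(b+c+x+y)) * (1 - q^(x+y)) * (1 - q^(b+c+2*(x+y)))) := by
  rw [Matrix.det_fin_three]
  simp only [Matrix.of_apply, Matrix.cons_val', Matrix.cons_val_zero, Matrix.cons_val_one,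
    Matrix.cons_val, Matrix.cons_val_fin_one, Fin.isValue, pow_add, pow_mul]
  ring

theorem q_spiral_det_three {K : Type*} [Field K] (q : K) (hq : q ≠ 0)
    (a b c x y : ℕ) :
    Matrix.det !![q^(a+b+x+2*y), q^(a+b+x+y), q^(a+b+x);
                  q^(a+b+c+x+2*y), q^a, q^(a+x);
                  q^(a+b+2*c+x+2*y), q^(a+b+2*c+2*x+2*y), q^(a+b+2*c+3*x+2*y)] =
    -(q^(3*a + 2*(b+c+x+y)) * (1 - q^(x+y)) * (1 - q^(b+c+2*(x+y)))) :=
  q_spiral_det_three_general q a b c x y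
end

section
/- For nonzero real numbers a, b, c, x, writing [t] = t - 1/t and ⟨t⟩ = t + 1/t, the determinant of the 3×3 matrix with rows ([abx·x²], [abx·x], [abx]), ([abcx·x²], [a], [ax]), ([abc²x·x²], [abc²x²·x²], [abc²x³·x²]) equals -[a²b²c²x⁶]·[x]·[(bc)^{1/2}x²]·⟨a b^{1/2} c^{1/2} x⟩, where b, c > 0 so that the square roots are defined. -/
theorem det_spiral_three_of_sq_eq_mul {K : Type*} [Field K] {a b c s x : K}
    (ha : a ≠ 0) (hb : b ≠ 0) (hc : c ≠ 0) (hx : x ≠ 0) (hs : s ^ 2 = b * c) :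
    Matrix.det !![a*b*x*x^2 - 1/(a*b*x*x^2), a*b*x*x - 1/(a*b*x*x), a*b*x - 1/(a*b*x);
                  a*b*c*x*x^2 - 1/(a*b*c*x*x^2), a - 1/a, a*x - 1/(a*x);
                  a*b*c^2*x*x^2 - 1/(a*b*c^2*x*x^2), a*b*c^2*x^2*x^2 - 1/(a*b*c^2*x^2*x^2),
                    a*b*c^2*x^3*x^2 - 1/(a*b*c^2*x^3*x^2)] =
    -((a^2*b^2*c^2*x^6 - 1/(a^2*b^2*c^2*x^6)) * (x - 1/x) *
      (s * x^2 - 1/(s * x^2)) * (a * s * x + 1/(a * s * x))) := by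
  have hs0 : s ≠ 0 := by rintro rfl; simp_all
  -- eliminating `c` turns the claim into an identity of rational functions in `a, b, s, x`
  obtain rfl : c = s ^ 2 / b := by rw [eq_div_iff hb, hs, mul_comm]
  rw [Matrix.det_fin_three]
  simp only [Matrix.of_apply, Matrix.cons_val', Matrix.cons_val_zero, Matrix.cons_val_one,
    Matrix.head_cons, Matrix.empty_val', Matrix.cons_val_fin_one, Matrix.head_fin_const,
    Matrix.cons_val_two, Matrix.tail_cons]
  field_simp
  ring

theorem z_spiral_det_three (a b c x : ℝ) (ha : a ≠ 0) (hx : x ≠ 0)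
    (hb : 0 < b) (hc : 0 < c) :
    Matrix.det !![a*b*x*x^2 - 1/(a*b*x*x^2), a*b*x*x - 1/(a*b*x*x), a*b*x - 1/(a*b*x);
                  a*b*c*x*x^2 - 1/(a*b*c*x*x^2), a - 1/a, a*x - 1/(a*x);
                  a*b*c^2*x*x^2 - 1/(a*b*c^2*x*x^2), a*b*c^2*x^2*x^2 - 1/(a*b*c^2*x^2*x^2),
                    a*b*c^2*x^3*x^2 - 1/(a*b*c^2*x^3*x^2)] =
    -((a^2*b^2*c^2*x^6 - 1/(a^2*b^2*c^2*x^6)) * (x - 1/x) *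
      (Real.sqrt (b*c) * x^2 - 1/(Real.sqrt (b*c) * x^2)) *
      (a * Real.sqrt b * Real.sqrt c * x + 1/(a * Real.sqrt b * Real.sqrt c * x))) := by
  rw [mul_assoc a (Real.sqrt b), ← Real.sqrt_mul hb.le]
  exact det_spiral_three_of_sq_eq_mul ha hb.ne' hc.ne' hx (Real.sq_sqrt (mul_pos hb hc).le)
end
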